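/- Let N ≥ 1, α ∈ (0,2), and let μ = y^{1−α} dx dy on ℝ^{N+1}_+. The extension operator T: u ↦ ω, where ω(x,y) = ∫_{ℝ^N} P(x−z,y) u(z) dz with P the α-Poisson kernel, is of weak type (1, r₀): ‖Tu‖_{L^{r₀,∞}(ℝ^{N+1}_+, μ)} ≤ C ‖u‖_{L¹(ℝ^N)}, where r₀ = (N+2−α)/N. -/

import Mathlib

open MeasureTheory Real

/-- The Caffarelli–Silvestre Poisson kernel. -/
noncomputable def csPoissonKernel (N : ℕ) (α : ℝ)
    (x : EuclideanSpace ℝ (Fin N)) (y : ℝ) : ℝ :=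
  (Real.Gamma (((N : ℝ) + α) / 2) / (Real.pi ^ ((N : ℝ) / 2) * Real.Gamma (α / 2))) *
    y ^ α / (‖x‖ ^ 2 + y ^ 2) ^ (((N : ℝ) + α) / 2)

/-!
For `y > 0` the kernel `P(·, y)` is positive, has total mass `∫ P(x, 1) dx` independent of `y`
(by the scaling `P(y x, y) = y^{-N} P(x, 1)`), and is maximal at the origin, where it equals
`y^{-N} P(0, 1)`. Hence `|ω(x, y)| ≤ y^{-N} P(0, 1) ‖u‖₁`, so the level set `{|ω| ≥ t}` lies in
the slab `0 < y ≤ Y := (P(0, 1) ‖u‖₁ / t)^{1/N}`, while Markov's inequality and Young's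
inequality bound each horizontal slice of it by `‖P(·, 1)‖₁ ‖u‖₁ / t`. Integrating the slices
against `y^{1-α} dy` over `(0, Y]` gives `Y^{2-α} / (2 - α) · ‖P(·, 1)‖₁ ‖u‖₁ / t`, which is
`C ‖u‖₁^{r₀} t^{-r₀}`.
-/

section Kernel

variable {N : ℕ} {α : ℝ}

theorem csPoissonKernel_pos (hα : 0 < α) {y : ℝ} (hy : 0 < y) (x : EuclideanSpace ℝ (Fin N)) :
    0 < csPoissonKernel N α x y := by
  unfold csPoissonKernel
  have := Real.Gamma_pos_of_pos (show 0 < ((N : ℝ) + α) / 2 by positivity)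
  have := Real.Gamma_pos_of_pos (show 0 < α / 2 by positivity)
  positivity

theorem csPoissonKernel_le_csPoissonKernel_zero (hα : 0 < α) {y : ℝ} (hy : 0 < y)
    (x : EuclideanSpace ℝ (Fin N)) :
    csPoissonKernel N α x y ≤ csPoissonKernel N α 0 y := by
  unfold csPoissonKernel
  have := Real.Gamma_pos_of_pos (show 0 < ((N : ℝ) + α) / 2 by positivity)
  have := Real.Gamma_pos_of_pos (show 0 < α / 2 by positivity)
  gcongr
  simp

theorem csPoissonKernel_smul_self {y : ℝ} (hy : 0 < y) (x : EuclideanSpace ℝ (Fin N)) :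
    csPoissonKernel N α (y • x) y = y ^ (-(N : ℝ)) * csPoissonKernel N α x 1 := by
  have hsq : ‖y • x‖ ^ 2 + y ^ 2 = y ^ (2 : ℝ) * (‖x‖ ^ 2 + 1 ^ 2) := by
    rw [norm_smul, Real.norm_of_nonneg hy.le, rpow_two]; ring
  have hpow : y ^ α / (y ^ (2 : ℝ)) ^ (((N : ℝ) + α) / 2) = y ^ (-(N : ℝ)) := by
    rw [← rpow_mul hy.le, ← rpow_sub hy]; ring_nf
  unfold csPoissonKernel
  rw [hsq, mul_rpow (by positivity) (by positivity), one_rpow, ← hpow]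
  ring

theorem integrable_csPoissonKernel_one (hα : 0 < α) :
    Integrable fun x : EuclideanSpace ℝ (Fin N) => csPoissonKernel N α x 1 := by
  have h := (integrable_rpow_neg_one_add_norm_sq (E := EuclideanSpace ℝ (Fin N))
    (μ := volume) (r := N + α) (by simpa using hα)).const_mul
      (Real.Gamma (((N : ℝ) + α) / 2) / (Real.pi ^ ((N : ℝ) / 2) * Real.Gamma (α / 2)))
  refine h.congr (Filter.Eventually.of_forall fun x => ?_)
  simp only [csPoissonKernel, one_rpow, one_pow, mul_one, neg_div, add_comm (1 : ℝ)]
  rw [rpow_neg (by positivity), ← div_eq_mul_inv]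

theorem integrable_csPoissonKernel (hα : 0 < α) {y : ℝ} (hy : 0 < y) :
    Integrable fun x : EuclideanSpace ℝ (Fin N) => csPoissonKernel N α x y := by
  rw [← integrable_comp_smul_iff volume _ hy.ne']
  simp_rw [csPoissonKernel_smul_self hy]
  exact (integrable_csPoissonKernel_one hα).const_mul _

theorem integral_csPoissonKernel {y : ℝ} (hy : 0 < y) :
    ∫ x : EuclideanSpace ℝ (Fin N), csPoissonKernel N α x y =
      ∫ x : EuclideanSpace ℝ (Fin N), csPoissonKernel N α x 1 := by
  have h := Measure.integral_comp_smul_of_nonneg volume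
    (fun x : EuclideanSpace ℝ (Fin N) => csPoissonKernel N α x y) y (hR := hy.le)
  simp_rw [csPoissonKernel_smul_self hy, integral_const_mul, finrank_euclideanSpace_fin,
    smul_eq_mul, ← rpow_natCast, rpow_neg hy.le] at h
  have : y ^ (N : ℝ) ≠ 0 := by positivity
  field_simp at h
  exact h.symm

theorem integral_csPoissonKernel_one_pos (hα : 0 < α) :
    0 < ∫ x : EuclideanSpace ℝ (Fin N), csPoissonKernel N α x 1 := by
  rw [integral_pos_iff_support_of_nonneg (fun x => (csPoissonKernel_pos hα one_pos x).le)
    (integrable_csPoissonKernel_one hα)]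
  simpa [Function.support_eq_univ fun x => (csPoissonKernel_pos hα one_pos x).ne'] using
    NeZero.ne volume

end Kernel

section General

variable {G : Type*} [AddGroup G] [MeasurableSpace G] [MeasurableAdd₂ G] [MeasurableNeg G]
  {μ : Measure G} [SFinite μ] [μ.IsAddRightInvariant]

theorem lintegral_enorm_integral_sub_mul_le {k u : G → ℝ} (hk : Measurable k)
    (hu : Measurable u) :
    ∫⁻ x, ‖∫ z, k (x - z) * u z ∂μ‖ₑ ∂μ ≤ (∫⁻ x, ‖k x‖ₑ ∂μ) * ∫⁻ z, ‖u z‖ₑ ∂μ :=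
  calc ∫⁻ x, ‖∫ z, k (x - z) * u z ∂μ‖ₑ ∂μ
      ≤ ∫⁻ x, ∫⁻ z, ‖k (x - z)‖ₑ * ‖u z‖ₑ ∂μ ∂μ := by
        gcongr with x
        simpa only [enorm_mul] using
          enorm_integral_le_lintegral_enorm (μ := μ) fun z => k (x - z) * u z
    _ = ∫⁻ z, ∫⁻ x, ‖k (x - z)‖ₑ * ‖u z‖ₑ ∂μ ∂μ :=
        lintegral_lintegral_swap (by fun_prop)
    _ = (∫⁻ x, ‖k x‖ₑ ∂μ) * ∫⁻ z, ‖u z‖ₑ ∂μ := by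
        simp_rw [lintegral_mul_const' _ _ enorm_ne_top,
          lintegral_sub_right_eq_self fun x => ‖k x‖ₑ]
        exact lintegral_const_mul _ (by fun_prop)

end General

theorem setLIntegral_comp_snd_le_of_slices {X Y : Type*} [MeasurableSpace X] [MeasurableSpace Y]
    {μ : Measure X} {ν : Measure Y} [SFinite μ] [SFinite ν] {S : Set (X × Y)}
    (hS : MeasurableSet S) {T : Set Y} (hT : MeasurableSet T) (hST : ∀ p ∈ S, p.2 ∈ T)
    {w : Y → ENNReal} (hw : Measurable w) {M : ENNReal}
    (hM : ∀ y ∈ T, μ {x | (x, y) ∈ S} ≤ M) :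
    ∫⁻ p in S, w p.2 ∂μ.prod ν ≤ M * ∫⁻ y in T, w y ∂ν := by
  have hslice (y : Y) : ∫⁻ x, S.indicator (fun p => w p.2) (x, y) ∂μ =
      w y * μ {x | (x, y) ∈ S} :=
    lintegral_indicator_const (measurable_prodMk_right hS) (w y)
  calc ∫⁻ p in S, w p.2 ∂μ.prod ν = ∫⁻ y, w y * μ {x | (x, y) ∈ S} ∂ν := by
        rw [← lintegral_indicator hS, lintegral_prod_symm _
          ((hw.comp measurable_snd).indicator hS (f := fun p => w p.2)).aemeasurable]
        simp_rw [hslice]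
    _ ≤ ∫⁻ y, T.indicator (fun y => M * w y) y ∂ν := by
        gcongr with y
        by_cases hy : y ∈ T
        · rw [Set.indicator_of_mem hy, mul_comm]
          gcongr
          exact hM y hy
        · have : {x | (x, y) ∈ S} = ∅ := Set.eq_empty_of_forall_notMem fun x hx => hy (hST _ hx)
          simp [this]
    _ = M * ∫⁻ y in T, w y ∂ν := by
        rw [lintegral_indicator hT, lintegral_const_mul _ hw]

theorem setLIntegral_Ioc_rpow {s : ℝ} (hs : -1 < s) {b : ℝ} (hb : 0 ≤ b) :
    ∫⁻ y in Set.Ioc 0 b, ENNReal.ofReal (y ^ s) = ENNReal.ofReal (b ^ (s + 1) / (s + 1)) := by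
  rw [← ofReal_integral_eq_lintegral_ofReal (intervalIntegral.intervalIntegrable_rpow' hs).1
    ((ae_restrict_iff' measurableSet_Ioc).2 (Filter.Eventually.of_forall fun y hy =>
      rpow_nonneg hy.1.le _)), ← intervalIntegral.integral_of_le hb, integral_rpow (Or.inl hs),
    zero_rpow (by linarith), sub_zero]

section Extension

variable {N : ℕ} {α : ℝ}

noncomputable def poissonExtension (N : ℕ) (α : ℝ) (u : EuclideanSpace ℝ (Fin N) → ℝ)
    (x : EuclideanSpace ℝ (Fin N)) (y : ℝ) : ℝ :=
  ∫ z, csPoissonKernel N α (x - z) y * u z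

theorem poissonExtension_congr_ae {u v : EuclideanSpace ℝ (Fin N) → ℝ} (h : u =ᵐ[volume] v) :
    poissonExtension N α u = poissonExtension N α v := by
  ext x y
  exact integral_congr_ae (h.mono fun z hz => by simp only [hz])

theorem measurable_poissonExtension {u : EuclideanSpace ℝ (Fin N) → ℝ} (hu : Measurable u) :
    Measurable fun p : EuclideanSpace ℝ (Fin N) × ℝ => poissonExtension N α u p.1 p.2 := by
  have hP : Measurable fun q : EuclideanSpace ℝ (Fin N) × ℝ => csPoissonKernel N α q.1 q.2 := by
    unfold csPoissonKernel
    fun_prop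
  refine StronglyMeasurable.measurable (StronglyMeasurable.integral_prod_right' (f := fun
    q : (EuclideanSpace ℝ (Fin N) × ℝ) × EuclideanSpace ℝ (Fin N) =>
      csPoissonKernel N α (q.1.1 - q.2) q.1.2 * u q.2) ?_)
  exact ((hP.comp ((measurable_fst.fst.sub measurable_snd).prodMk measurable_fst.snd)).mul
    (hu.comp measurable_snd)).stronglyMeasurable

theorem abs_poissonExtension_le (hα : 0 < α) {u : EuclideanSpace ℝ (Fin N) → ℝ}
    (hu : Integrable u) {y : ℝ} (hy : 0 < y) (x : EuclideanSpace ℝ (Fin N)) :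
    |poissonExtension N α u x y| ≤ y ^ (-(N : ℝ)) * csPoissonKernel N α 0 1 * ∫ z, |u z| := by
  have hP0 : csPoissonKernel N α 0 y = y ^ (-(N : ℝ)) * csPoissonKernel N α 0 1 := by
    simpa using csPoissonKernel_smul_self (α := α) hy (0 : EuclideanSpace ℝ (Fin N))
  rw [← hP0, ← integral_const_mul]
  refine norm_integral_le_of_norm_le (f := fun z => csPoissonKernel N α (x - z) y * u z)
    (hu.abs.const_mul _) (Filter.Eventually.of_forall fun z => ?_)
  rw [norm_mul, Real.norm_of_nonneg (csPoissonKernel_pos hα hy _).le, Real.norm_eq_abs]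
  gcongr
  exact csPoissonKernel_le_csPoissonKernel_zero hα hy _

theorem le_rpow_inv_of_le_abs_poissonExtension (hN : 0 < N) (hα : 0 < α)
    {u : EuclideanSpace ℝ (Fin N) → ℝ} (hu : Integrable u) {t : ℝ} (ht : 0 < t) {y : ℝ}
    (hy : 0 < y) {x : EuclideanSpace ℝ (Fin N)} (hxy : t ≤ |poissonExtension N α u x y|) :
    y ≤ (csPoissonKernel N α 0 1 * (∫ z, |u z|) / t) ^ (N : ℝ)⁻¹ := by
  have hc := (csPoissonKernel_pos (N := N) hα one_pos 0).le
  have hI : 0 ≤ ∫ z, |u z| := integral_nonneg fun z => abs_nonneg _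
  have hbound := hxy.trans (abs_poissonExtension_le hα hu hy x)
  rw [rpow_neg hy.le, mul_assoc, le_inv_mul_iff₀ (by positivity)] at hbound
  rw [le_rpow_inv_iff_of_pos hy.le (by positivity) (by exact_mod_cast hN), le_div_iff₀ ht]
  exact hbound

theorem volume_setOf_le_abs_poissonExtension_le (hα : 0 < α) {u : EuclideanSpace ℝ (Fin N) → ℝ}
    (hu : Measurable u) (hui : Integrable u) {t : ℝ} (ht : 0 < t) {y : ℝ} (hy : 0 < y) :
    volume {x | t ≤ |poissonExtension N α u x y|} ≤
      ENNReal.ofReal ((∫ x, csPoissonKernel N α x 1) * (∫ z, |u z|) / t) := by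
  have hωy : Measurable fun x => poissonExtension N α u x y :=
    (measurable_poissonExtension hu).comp measurable_prodMk_right
  have hP : Measurable fun x => csPoissonKernel N α x y := by
    unfold csPoissonKernel
    fun_prop
  have hPnorm :
      ∫⁻ x, ‖csPoissonKernel N α x y‖ₑ = ENNReal.ofReal (∫ x, csPoissonKernel N α x 1) := by
    rw [← ofReal_integral_norm_eq_lintegral_enorm (integrable_csPoissonKernel hα hy)]
    simp_rw [Real.norm_of_nonneg (csPoissonKernel_pos hα hy _).le, integral_csPoissonKernel hy]
  calc volume {x | t ≤ |poissonExtension N α u x y|}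
      = volume {x | ENNReal.ofReal t ≤ ‖poissonExtension N α u x y‖ₑ} := by
        simp_rw [Real.enorm_eq_ofReal_abs, ENNReal.ofReal_le_ofReal_iff (abs_nonneg _)]
    _ ≤ (∫⁻ x, ‖poissonExtension N α u x y‖ₑ) / ENNReal.ofReal t :=
        meas_ge_le_lintegral_div hωy.enorm.aemeasurable (by simpa using ht) ENNReal.ofReal_ne_top
    _ ≤ (∫⁻ x, ‖csPoissonKernel N α x y‖ₑ) * (∫⁻ z, ‖u z‖ₑ) / ENNReal.ofReal t := by
        gcongr
        exact lintegral_enorm_integral_sub_mul_le hP hu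
    _ = ENNReal.ofReal ((∫ x, csPoissonKernel N α x 1) * (∫ z, |u z|) / t) := by
        rw [hPnorm, ← ofReal_integral_norm_eq_lintegral_enorm hui, ← ENNReal.ofReal_mul
          (integral_csPoissonKernel_one_pos hα).le, ENNReal.ofReal_div_of_pos ht]
        rfl

end Extension

theorem rpow_mul_cutoff_eq {n a t K c I : ℝ} (hn : 0 < n) (ha : 0 < a) (ht : 0 < t)
    (hc : 0 ≤ c) (hI : 0 ≤ I) :
    t ^ ((n + a) / n) * (K * I / t * (((c * I / t) ^ n⁻¹) ^ a / a)) =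
      K * c ^ (a / n) / a * I ^ ((n + a) / n) := by
  have hr : (n + a) / n = 1 + a / n := by field_simp
  have hβ : 1 + a / n ≠ 0 := by positivity
  rw [← rpow_mul (by positivity), inv_mul_eq_div, div_rpow (by positivity) ht.le,
    mul_rpow hc hI, hr, rpow_add ht, rpow_add' hI hβ, rpow_one, rpow_one]
  have : t ^ (a / n) ≠ 0 := by positivity
  field_simp

theorem weakType_poissonExtension_of_measurable (hN : 0 < N) (hα : 0 < α) (hα2 : α < 2)
    {u : EuclideanSpace ℝ (Fin N) → ℝ} (hu : Measurable u) (hui : Integrable u)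
    {t : ℝ} (ht : 0 < t) :
    ENNReal.ofReal (t ^ (((N : ℝ) + 2 - α) / N)) *
      ∫⁻ p in {p : EuclideanSpace ℝ (Fin N) × ℝ |
          0 < p.2 ∧ t ≤ |poissonExtension N α u p.1 p.2|}, ENNReal.ofReal (p.2 ^ (1 - α))
    ≤ ENNReal.ofReal ((∫ x, csPoissonKernel N α x 1) * csPoissonKernel N α 0 1 ^ ((2 - α) / N) /
        (2 - α) * (∫ z, |u z|) ^ (((N : ℝ) + 2 - α) / N)) := by
  set K := ∫ x, csPoissonKernel N α x 1
  set c := csPoissonKernel N α 0 1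
  set I := ∫ z, |u z|
  have hK : 0 ≤ K := (integral_csPoissonKernel_one_pos hα).le
  have hc : 0 ≤ c := (csPoissonKernel_pos hα one_pos 0).le
  have hI : 0 ≤ I := integral_nonneg fun z => abs_nonneg _
  have hS : MeasurableSet {p : EuclideanSpace ℝ (Fin N) × ℝ |
      0 < p.2 ∧ t ≤ |poissonExtension N α u p.1 p.2|} :=
    (measurableSet_lt measurable_const measurable_snd).inter
      (measurableSet_le measurable_const (measurable_poissonExtension hu).abs)
  have hlevel := setLIntegral_comp_snd_le_of_slices (μ := volume) (ν := volume) hS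
    (T := Set.Ioc 0 ((c * I / t) ^ (N : ℝ)⁻¹)) measurableSet_Ioc
    (fun p hp => ⟨hp.1, le_rpow_inv_of_le_abs_poissonExtension hN hα hui ht hp.1 hp.2⟩)
    (w := fun y => ENNReal.ofReal (y ^ (1 - α))) (by fun_prop)
    (fun y hy => (measure_mono fun x hx => hx.2).trans
      (volume_setOf_le_abs_poissonExtension_le hα hu hui ht hy.1))
  rw [setLIntegral_Ioc_rpow (by linarith) (rpow_nonneg (div_nonneg (mul_nonneg hc hI) ht.le) _),
    show 1 - α + 1 = 2 - α by ring, ← Measure.volume_eq_prod] at hlevel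
  calc _ ≤ ENNReal.ofReal (t ^ (((N : ℝ) + 2 - α) / N)) * (ENNReal.ofReal (K * I / t) *
        ENNReal.ofReal (((c * I / t) ^ (N : ℝ)⁻¹) ^ (2 - α) / (2 - α))) := by
        gcongr
    _ = _ := by
        rw [← ENNReal.ofReal_mul (div_nonneg (mul_nonneg hK hI) ht.le),
          ← ENNReal.ofReal_mul (rpow_nonneg ht.le _),
          show (N : ℝ) + 2 - α = N + (2 - α) by ring,
          rpow_mul_cutoff_eq (by exact_mod_cast hN) (by linarith) ht hc hI]

/-- The extension operator `T : u ↦ ω` is of weak type `(1, r₀)`,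
`r₀ = (N+2-α)/N`, with respect to the measure `y^{1-α} dx dy` on `ℝ^{N+1}_+`. -/
theorem stmt5 (N : ℕ) (hN : 1 ≤ N) (α : ℝ) (hα : 0 < α) (hα2 : α < 2) :
    ∃ C : ℝ, 0 < C ∧ ∀ u : EuclideanSpace ℝ (Fin N) → ℝ, Integrable u volume →
      ∀ t : ℝ, 0 < t →
        ENNReal.ofReal (t ^ (((N : ℝ) + 2 - α) / N)) *
          (∫⁻ p in {p : EuclideanSpace ℝ (Fin N) × ℝ | 0 < p.2 ∧
              t ≤ |∫ z : EuclideanSpace ℝ (Fin N), csPoissonKernel N α (p.1 - z) p.2 * u z|},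
            ENNReal.ofReal (p.2 ^ (1 - α)))
        ≤ ENNReal.ofReal (C * (∫ z : EuclideanSpace ℝ (Fin N), |u z|) ^ (((N : ℝ) + 2 - α) / N)) := by
  have hK := integral_csPoissonKernel_one_pos (N := N) hα
  have hc := csPoissonKernel_pos (N := N) hα one_pos 0
  have h2α : 0 < 2 - α := by linarith
  refine ⟨(∫ x, csPoissonKernel N α x 1) * csPoissonKernel N α 0 1 ^ ((2 - α) / N) / (2 - α),
    div_pos (mul_pos hK (rpow_pos_of_pos hc _)) h2α, fun u hu t ht => ?_⟩
  have hI : ∫ z, |u z| = ∫ z, |hu.1.mk u z| := integral_congr_ae (hu.1.ae_eq_mk.fun_comp abs)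
  change _ * ∫⁻ p in {p : EuclideanSpace ℝ (Fin N) × ℝ |
    0 < p.2 ∧ t ≤ |poissonExtension N α u p.1 p.2|}, _ ≤ _
  rw [poissonExtension_congr_ae hu.1.ae_eq_mk, hI]
  exact weakType_poissonExtension_of_measurable hN hα hα2 hu.1.stronglyMeasurable_mk.measurable
    (hu.congr hu.1.ae_eq_mk) ht
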